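/- Let p be a strictly positive N×M matrix of prices and q a quantity matrix, and let w_{ij} = p_{ij} q_{ij} / Σ_{n=1}^N p_{nj} q_{nj} denote expenditure shares and w*_{ij} = w_{ij} / Σ_{m=1}^M w_{im}. Consider the Iklé–Dikhanov–Balk (IDB) system: 1/PPP_j = Σ_{n=1}^N w_{nj} (P_n / p_{nj}) for j = 1,…,M and 1/P_i = Σ_{m=1}^M w*_{im} (PPP_m / p_{im}) for i = 1,…,N. Then a strictly positive solution (PPP, P), unique up to the rescaling (PPP, P) ↦ (γ·PPP, (1/γ)·P) for γ > 0, exists if and only if the quantity matrix q is connected. -/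

import Mathlib

/-!
With `A i j = w i j / p i j` the IDB system says exactly that `diag P * A * diag PPP` has the row
sums of `w` and all column sums `1`: a matrix-scaling problem.

Existence: in logarithmic coordinates `P = exp a`, `PPP = exp b` the scaling equations are the
critical-point equations of `∑ i j, (A i j * exp (a i + b j) - w i j * (a i + b j))`. This potential
is invariant under `(a, b) ↦ (a + t, b - t)`, so `b` may be pinned at one country. Each term is
bounded below and coercive in `a i + b j` when `q i j > 0`, so on a sublevel set every such sum is
bounded, and connectedness propagates this to all `b j` and then to all `a i`: the pinned sublevel
set is compact and the potential has a minimum.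

Uniqueness: for two solutions, `∑ i j, A i j (s' - s) (log s' - log s) = 0` with `s = P i * PPP j`
by the margin equations, and every term is nonnegative, so `s' = s` wherever `q i j > 0`; along
connected countries this forces `PPP' = γ PPP`, `P' = γ⁻¹ P`.

If `q` is disconnected along `J`, doubling `PPP` on `J` and halving `P` on the commodities traded
in `J` gives a second solution that is not a rescaling of the first.
-/

open Finset

/-- Connectedness of the quantity matrix `q`. -/
def QConnected {N M : ℕ} (q : Fin N → Fin M → ℝ) : Prop :=
  ∀ J : Finset (Fin M), J.Nonempty → J ≠ Finset.univ →
    ∃ j ∈ J, ∃ l ∉ J, ∃ k, 0 < q k j ∧ 0 < q k l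

/-- `(PPP, P)` solves the Iklé–Dikhanov–Balk system with expenditure-share weights `w`
and normalized expenditure-share weights `wstar`. -/
def IDBSol {N M : ℕ} (p : Fin N → Fin M → ℝ) (w wstar : Fin N → Fin M → ℝ)
    (PPP : Fin M → ℝ) (P : Fin N → ℝ) : Prop :=
  (∀ j, (PPP j)⁻¹ = ∑ n, w n j * (P n / p n j)) ∧
  (∀ i, (P i)⁻¹ = ∑ m, wstar i m * (PPP m / p i m))


open Real Bornology

theorem exists_le_mul_exp_sub_mul {A w : ℝ} (hA : 0 ≤ A) (hw : 0 ≤ w)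
    (hwA : 0 < w → 0 < A) : ∃ m, ∀ u, m ≤ A * exp u - w * u := by
  rcases hw.eq_or_lt with rfl | hw
  · exact ⟨0, fun u => by simpa using mul_nonneg hA (exp_pos u).le⟩
  · -- the minimum, attained at `exp u = w / A`
    refine ⟨w - w * log (w / A), fun u => ?_⟩
    have hA := hwA hw
    have h := add_one_le_exp (u - log (w / A))
    rw [exp_sub, exp_log (div_pos hw hA)] at h
    have hwexp : w * (exp u / (w / A)) = A * exp u := by field_simp
    nlinarith [mul_le_mul_of_nonneg_left h hw.le]

theorem exists_abs_le_of_mul_exp_sub_mul_le {A w : ℝ} (hA : 0 < A) (hw : 0 < w) (C : ℝ) :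
    ∃ R, ∀ u, A * exp u - w * u ≤ C → |u| ≤ R := by
  refine ⟨|C| / w + 2 * (|C| + w) / A + 1, fun u hu => ?_⟩
  have hC := le_abs_self C
  have h₁ : 0 ≤ |C| / w := by positivity
  have h₂ : 0 ≤ 2 * (|C| + w) / A := by positivity
  rcases le_or_gt u 0 with hu0 | hu0
  · have : -u ≤ |C| / w := by
      rw [le_div_iff₀ hw]
      nlinarith [mul_nonneg hA.le (exp_pos u).le]
    rw [abs_of_nonpos hu0]
    linarith
  · rw [abs_of_pos hu0]
    by_contra! hR
    have hexp := quadratic_le_exp_of_nonneg hu0.le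
    have hu1 : 1 < u := by linarith
    have hAu : 2 * (|C| + w) < A * u := by
      have := (div_lt_iff₀ hA).1 (show 2 * (|C| + w) / A < u by linarith)
      linarith
    nlinarith [mul_le_mul_of_nonneg_left hexp hA.le, mul_lt_mul_of_pos_right hAu hu0,
      mul_le_mul_of_nonneg_left hu1.le (abs_nonneg C)]

theorem sub_mul_log_sub_log_pos {s t : ℝ} (hs : 0 < s) (ht : 0 < t) (hst : s ≠ t) :
    0 < (s - t) * (log s - log t) := by
  rcases hst.lt_or_gt with h | h
  · exact mul_pos_of_neg_of_neg (sub_neg.2 h) (sub_neg.2 (log_lt_log hs h))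
  · exact mul_pos (sub_pos.2 h) (sub_pos.2 (log_lt_log ht h))

theorem sub_mul_log_sub_log_nonneg {s t : ℝ} (hs : 0 < s) (ht : 0 < t) :
    0 ≤ (s - t) * (log s - log t) := by
  rcases eq_or_ne s t with rfl | hst
  · simp
  · exact (sub_mul_log_sub_log_pos hs ht hst).le

theorem isBounded_pi_of_forall_abs_le {X : Type*} {s : Set (X → ℝ)}
    (h : ∀ i, ∃ R, ∀ z ∈ s, |z i| ≤ R) : IsBounded s :=
  forall_isBounded_image_eval_iff.1 fun i =>
    isBounded_iff_forall_norm_le.2 <| (h i).imp fun _ hR => by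
      rintro _ ⟨z, hz, rfl⟩
      exact hR z hz

theorem isBounded_of_forall_abs_le {X Y : Type*} {s : Set ((X → ℝ) × (Y → ℝ))}
    (ha : ∀ i, ∃ R, ∀ z ∈ s, |z.1 i| ≤ R) (hb : ∀ j, ∃ R, ∀ z ∈ s, |z.2 j| ≤ R) :
    IsBounded s := by
  refine isBounded_image_fst_and_snd.1
    ⟨isBounded_pi_of_forall_abs_le fun i => ?_, isBounded_pi_of_forall_abs_le fun j => ?_⟩
  · exact (ha i).imp fun _ hR => by rintro _ ⟨z, hz, rfl⟩; exact hR z hz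
  · exact (hb j).imp fun _ hR => by rintro _ ⟨z, hz, rfl⟩; exact hR z hz

section Scaling

variable {ι κ : Type*} [Fintype ι] [Fintype κ]

def IsScaling (A : ι → κ → ℝ) (r : ι → ℝ) (c : κ → ℝ) (y : ι → ℝ) (x : κ → ℝ) : Prop :=
  (∀ i, ∑ j, y i * A i j * x j = r i) ∧ ∀ j, ∑ i, y i * A i j * x j = c j

noncomputable def scalingPotential (A w : ι → κ → ℝ) (a : ι → ℝ) (b : κ → ℝ) : ℝ :=
  ∑ i, ∑ j, (A i j * exp (a i + b j) - w i j * (a i + b j))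

theorem scalingPotential_transpose (A w : ι → κ → ℝ) (a : ι → ℝ) (b : κ → ℝ) :
    scalingPotential (fun j i => A i j) (fun j i => w i j) b a = scalingPotential A w a b := by
  rw [scalingPotential, sum_comm]
  simp only [add_comm (b _)]
  rfl

theorem scalingPotential_shift (A w : ι → κ → ℝ) (a : ι → ℝ) (b : κ → ℝ) (t : ℝ) :
    scalingPotential A w (fun i => a i + t) (fun j => b j - t) = scalingPotential A w a b := by
  simp only [scalingPotential, add_add_sub_cancel]

theorem scalingPotential_update [DecidableEq ι] (A w : ι → κ → ℝ) (a : ι → ℝ) (b : κ → ℝ)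
    (i : ι) (t : ℝ) :
    scalingPotential A w (Function.update a i (a i + t)) b =
      scalingPotential A w a b + (exp t - 1) * ∑ j, A i j * exp (a i + b j) - t * ∑ j, w i j := by
  have hrest : ∀ k ∈ ({i}ᶜ : Finset ι), Function.update a i (a i + t) k = a k := fun k hk =>
    Function.update_of_ne (by simpa using hk) _ _
  simp only [scalingPotential]
  rw [Fintype.sum_eq_add_sum_compl i, Fintype.sum_eq_add_sum_compl i (f := fun k => ∑ j, _),
    sum_congr (s₁ := {i}ᶜ) rfl fun k hk => by rw [hrest k hk], Function.update_self]
  have hshifted : ∑ j, (A i j * exp (a i + t + b j) - w i j * (a i + t + b j)) =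
      ∑ j, (A i j * exp (a i + b j) - w i j * (a i + b j)) +
        ((exp t - 1) * ∑ j, A i j * exp (a i + b j) - t * ∑ j, w i j) := by
    rw [mul_sum, mul_sum, ← sum_sub_distrib, ← sum_add_distrib]
    refine sum_congr rfl fun j _ => ?_
    rw [show a i + t + b j = t + (a i + b j) by ring, exp_add]
    ring
  rw [hshifted]
  ring

theorem sum_mul_exp_eq_of_forall_le {A w : ι → κ → ℝ} {a : ι → ℝ} {b : κ → ℝ}
    (h : ∀ a', scalingPotential A w a b ≤ scalingPotential A w a' b) (i : ι) :
    ∑ j, A i j * exp (a i + b j) = ∑ j, w i j := by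
  classical
  set S := ∑ j, A i j * exp (a i + b j)
  set r := ∑ j, w i j
  let g : ℝ → ℝ := fun t => scalingPotential A w a b + (exp t - 1) * S - t * r
  have hmin : IsLocalMin g 0 := Filter.Eventually.of_forall fun t => by
    have := h (Function.update a i (a i + t))
    rw [scalingPotential_update] at this
    simpa [g] using this
  have hderiv : HasDerivAt g (S - r) 0 := by
    simpa using ((((hasDerivAt_exp 0).sub_const 1).mul_const S).const_add _).fun_sub
      ((hasDerivAt_id 0).mul_const r)
  linarith [hmin.hasDerivAt_eq_zero hderiv]

theorem exists_abs_add_le_of_scalingPotential_le {A w : ι → κ → ℝ} (hA : ∀ i j, 0 ≤ A i j)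
    (hw : ∀ i j, 0 ≤ w i j) (hwA : ∀ i j, 0 < w i j ↔ 0 < A i j) (C : ℝ) {i : ι} {j : κ}
    (hij : 0 < A i j) :
    ∃ R, ∀ a b, scalingPotential A w a b ≤ C → |a i + b j| ≤ R := by
  choose m hm using fun i j => exists_le_mul_exp_sub_mul (hA i j) (hw i j) (hwA i j).1
  obtain ⟨R, hR⟩ := exists_abs_le_of_mul_exp_sub_mul_le hij ((hwA i j).2 hij)
    (C - ∑ k, ∑ l, m k l + m i j)
  refine ⟨R, fun a b h => hR _ ?_⟩
  set f : ι → κ → ℝ := fun k l => A k l * exp (a k + b l) - w k l * (a k + b l)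
  have hfm : ∀ k l, 0 ≤ f k l - m k l := fun k l => sub_nonneg.2 (hm k l _)
  have h₁ : f i j - m i j ≤ ∑ l, (f i l - m i l) :=
    single_le_sum (fun l _ => hfm i l) (mem_univ j)
  have h₂ : ∑ l, (f i l - m i l) ≤ ∑ k, ∑ l, (f k l - m k l) :=
    single_le_sum (f := fun k => ∑ l, (f k l - m k l))
      (fun k _ => sum_nonneg fun l _ => hfm k l) (mem_univ i)
  simp only [sum_sub_distrib] at h₁ h₂
  change ∑ k, ∑ l, f k l ≤ C at h
  change f i j ≤ _
  linarith

theorem IsScaling.mul_eq_mul {A : ι → κ → ℝ} {r : ι → ℝ} {c : κ → ℝ} {y y' : ι → ℝ}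
    {x x' : κ → ℝ} (h : IsScaling A r c y x) (h' : IsScaling A r c y' x')
    (hA : ∀ i j, 0 ≤ A i j) (hy : ∀ i, 0 < y i) (hx : ∀ j, 0 < x j) (hy' : ∀ i, 0 < y' i)
    (hx' : ∀ j, 0 < x' j) {i : ι} {j : κ} (hij : 0 < A i j) : y' i * x' j = y i * x j := by
  set D : ι → κ → ℝ := fun i j => y' i * A i j * x' j - y i * A i j * x j
  set α : ι → ℝ := fun i => log (y' i) - log (y i)
  set β : κ → ℝ := fun j => log (x' j) - log (x j)
  have hterm : ∀ i j, D i j * (α i + β j) =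
      A i j * ((y' i * x' j - y i * x j) * (log (y' i * x' j) - log (y i * x j))) := by
    intro i j
    rw [log_mul (hy' i).ne' (hx' j).ne', log_mul (hy i).ne' (hx j).ne']
    ring
  have hnonneg : ∀ i j, 0 ≤ D i j * (α i + β j) := fun i j => by
    rw [hterm]
    exact mul_nonneg (hA i j)
      (sub_mul_log_sub_log_nonneg (mul_pos (hy' i) (hx' j)) (mul_pos (hy i) (hx j)))
  have hsum : ∑ i, ∑ j, D i j * (α i + β j) = 0 := by
    have hrow : ∀ i, ∑ j, D i j = 0 := fun i => by
      simp only [D, sum_sub_distrib, h.1, h'.1, sub_self]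
    have hcol : ∀ j, ∑ i, D i j = 0 := fun j => by
      simp only [D, sum_sub_distrib, h.2, h'.2, sub_self]
    simp only [mul_add, sum_add_distrib]
    rw [sum_comm (f := fun i j => D i j * β j)]
    simp only [← sum_mul, hrow, hcol, zero_mul, sum_const_zero, add_zero]
  have hzero : D i j * (α i + β j) = 0 :=
    (sum_eq_zero_iff_of_nonneg fun j _ => hnonneg i j).1
      ((sum_eq_zero_iff_of_nonneg fun i _ => sum_nonneg fun j _ => hnonneg i j).1 hsum i
        (mem_univ i)) j (mem_univ j)
  by_contra hne
  rw [hterm] at hzero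
  exact (mul_pos hij (sub_mul_log_sub_log_pos (mul_pos (hy' i) (hx' j)) (mul_pos (hy i) (hx j))
    hne)).ne' hzero

open Classical in
theorem IsScaling.rescale_block {A : ι → κ → ℝ} {r : ι → ℝ} {c : κ → ℝ} {y : ι → ℝ}
    {x : κ → ℝ} (h : IsScaling A r c y x) (hA : ∀ i j, 0 ≤ A i j) {J : Finset κ}
    (hJ : ∀ j ∈ J, ∀ l ∉ J, ∀ k, 0 < A k j → A k l ≤ 0) {t : ℝ} (ht : t ≠ 0) :
    IsScaling A r c (fun i => if ∃ j ∈ J, 0 < A i j then y i / t else y i)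
      (fun j => if j ∈ J then t * x j else x j) := by
  have key : ∀ i j, (if ∃ j ∈ J, 0 < A i j then y i / t else y i) * A i j *
      (if j ∈ J then t * x j else x j) = y i * A i j * x j := by
    intro i j
    rcases (hA i j).eq_or_lt with h0 | hpos
    · simp [← h0]
    by_cases hj : j ∈ J
    · rw [if_pos ⟨j, hj, hpos⟩, if_pos hj]
      field_simp
    · have : ¬ ∃ j' ∈ J, 0 < A i j' := fun ⟨j', hj', h'⟩ => (hJ j' hj' j hj i h').not_gt hpos
      rw [if_neg this, if_neg hj]
  simpa only [IsScaling, key] using h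

end Scaling

section Connected

variable {N M : ℕ}

theorem qConnected_congr {A q : Fin N → Fin M → ℝ} (h : ∀ i j, 0 < A i j ↔ 0 < q i j) :
    QConnected A ↔ QConnected q := by
  simp only [QConnected, h]

theorem QConnected.induction {q : Fin N → Fin M → ℝ} (hq : QConnected q) {S : Fin M → Prop}
    (j₀ : Fin M) (base : S j₀) (step : ∀ k j l, 0 < q k j → 0 < q k l → S j → S l) (j : Fin M) :
    S j := by
  classical
  by_contra hj
  obtain ⟨j, hjS, l, hlS, k, hkj, hkl⟩ := hq {j | S j} ⟨j₀, by simpa using base⟩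
    fun h => hj (by simpa using eq_univ_iff_forall.1 h j)
  simp only [mem_filter, mem_univ, true_and] at hjS hlS
  exact hlS (step k j l hkj hkl hjS)

theorem isBounded_scalingPotential_le {A w : Fin N → Fin M → ℝ} (hA : ∀ i j, 0 ≤ A i j)
    (hw : ∀ i j, 0 ≤ w i j) (hwA : ∀ i j, 0 < w i j ↔ 0 < A i j) (hconn : QConnected A)
    (hrow : ∀ i, ∃ j, 0 < A i j) (C : ℝ) (j₀ : Fin M) :
    IsBounded {z : (Fin N → ℝ) × (Fin M → ℝ) | scalingPotential A w z.1 z.2 ≤ C ∧ z.2 j₀ = 0} := by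
  set K := {z : (Fin N → ℝ) × (Fin M → ℝ) | scalingPotential A w z.1 z.2 ≤ C ∧ z.2 j₀ = 0}
  have hpair : ∀ i j, 0 < A i j → ∃ R, ∀ z ∈ K, |z.1 i + z.2 j| ≤ R := fun i j hij =>
    (exists_abs_add_le_of_scalingPotential_le hA hw hwA C hij).imp fun _ hR z hz => hR _ _ hz.1
  have hb : ∀ j, ∃ R, ∀ z ∈ K, |z.2 j| ≤ R := by
    refine hconn.induction j₀ ⟨0, fun z hz => by simp [hz.2]⟩ fun k j l hkj hkl ⟨R, hR⟩ => ?_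
    obtain ⟨R₁, hR₁⟩ := hpair k j hkj
    obtain ⟨R₂, hR₂⟩ := hpair k l hkl
    refine ⟨R₂ + R₁ + R, fun z hz => ?_⟩
    have h := abs_le.1 (hR z hz)
    have h₁ := abs_le.1 (hR₁ z hz)
    have h₂ := abs_le.1 (hR₂ z hz)
    exact abs_le.2 ⟨by linarith, by linarith⟩
  refine isBounded_of_forall_abs_le (fun i => ?_) hb
  obtain ⟨j, hij⟩ := hrow i
  obtain ⟨R₁, hR₁⟩ := hpair i j hij
  obtain ⟨R, hR⟩ := hb j
  refine ⟨R₁ + R, fun z hz => ?_⟩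
  have h := abs_le.1 (hR z hz)
  have h₁ := abs_le.1 (hR₁ z hz)
  exact abs_le.2 ⟨by linarith, by linarith⟩

theorem exists_forall_scalingPotential_le {A w : Fin N → Fin M → ℝ} (hA : ∀ i j, 0 ≤ A i j)
    (hw : ∀ i j, 0 ≤ w i j) (hwA : ∀ i j, 0 < w i j ↔ 0 < A i j) (hconn : QConnected A)
    (hrow : ∀ i, ∃ j, 0 < A i j) (hM : 0 < M) :
    ∃ a b, ∀ a' b', scalingPotential A w a b ≤ scalingPotential A w a' b' := by
  set F := fun z : (Fin N → ℝ) × (Fin M → ℝ) => scalingPotential A w z.1 z.2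
  have hF : Continuous F := by simp only [F, scalingPotential]; fun_prop
  set j₀ : Fin M := ⟨0, hM⟩
  have hK : IsCompact {z | F z ≤ F 0 ∧ z.2 j₀ = 0} :=
    Metric.isCompact_of_isClosed_isBounded
      ((isClosed_le hF continuous_const).inter (isClosed_eq (by fun_prop) continuous_const))
      (isBounded_scalingPotential_le hA hw hwA hconn hrow _ j₀)
  obtain ⟨z, hzK, hz⟩ := hK.exists_isMinOn ⟨0, le_rfl, rfl⟩ hF.continuousOn
  refine ⟨z.1, z.2, fun a b => ?_⟩
  rw [← scalingPotential_shift A w a b (b j₀)]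
  set z' : (Fin N → ℝ) × (Fin M → ℝ) := (fun i => a i + b j₀, fun j => b j - b j₀)
  change F z ≤ F z'
  by_cases hle : F z' ≤ F 0
  · exact hz (show z' ∈ {z | F z ≤ F 0 ∧ z.2 j₀ = 0} from ⟨hle, sub_self _⟩)
  · exact hzK.1.trans (not_le.1 hle).le

theorem exists_isScaling {A w : Fin N → Fin M → ℝ} (hA : ∀ i j, 0 ≤ A i j)
    (hw : ∀ i j, 0 ≤ w i j) (hwA : ∀ i j, 0 < w i j ↔ 0 < A i j) (hconn : QConnected A)
    (hrow : ∀ i, ∃ j, 0 < A i j) (hM : 0 < M) :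
    ∃ y x, (∀ i, 0 < y i) ∧ (∀ j, 0 < x j) ∧
      IsScaling A (fun i => ∑ j, w i j) (fun j => ∑ i, w i j) y x := by
  obtain ⟨a, b, hmin⟩ := exists_forall_scalingPotential_le hA hw hwA hconn hrow hM
  have hexp : ∀ i j, exp (a i) * A i j * exp (b j) = A i j * exp (a i + b j) := fun i j => by
    rw [exp_add]; ring
  refine ⟨fun i => exp (a i), fun j => exp (b j), fun i => exp_pos _, fun j => exp_pos _,
    fun i => ?_, fun j => ?_⟩
  · simp only [hexp]
    exact sum_mul_exp_eq_of_forall_le (fun a' => hmin a' b) i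
  · -- the column equations are the row equations of the transposed problem
    have := sum_mul_exp_eq_of_forall_le (A := fun j i => A i j) (w := fun j i => w i j)
      (fun b' => by simpa only [scalingPotential_transpose] using hmin a b') j
    simpa only [hexp, add_comm (b j)] using this

theorem QConnected.exists_eq_mul_of_mul_eq {A : Fin N → Fin M → ℝ} (hq : QConnected A)
    (hM : 0 < M) (hrow : ∀ i, ∃ j, 0 < A i j) {y y' : Fin N → ℝ} {x x' : Fin M → ℝ}
    (hx : ∀ j, 0 < x j) (hx' : ∀ j, 0 < x' j) (hy' : ∀ i, y' i ≠ 0)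
    (h : ∀ i j, 0 < A i j → y' i * x' j = y i * x j) :
    ∃ γ : ℝ, 0 < γ ∧ (∀ j, x' j = γ * x j) ∧ ∀ i, y' i = γ⁻¹ * y i := by
  set j₀ : Fin M := ⟨0, hM⟩
  set γ := x' j₀ / x j₀
  have hratio : ∀ i j, 0 < A i j → x' j = γ * x j → γ * y' i = y i := fun i j hij hj =>
    mul_right_cancel₀ (hx j).ne' (by rw [← h i j hij, hj]; ring)
  have hcol : ∀ j, x' j = γ * x j := by
    refine hq.induction j₀ (div_mul_cancel₀ _ (hx j₀).ne').symm fun k j l hkj hkl hj => ?_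
    refine mul_left_cancel₀ (hy' k) ?_
    rw [h k l hkl, ← hratio k j hkj hj]
    ring
  refine ⟨γ, div_pos (hx' j₀) (hx j₀), hcol, fun i => ?_⟩
  obtain ⟨j, hij⟩ := hrow i
  rw [eq_inv_mul_iff_mul_eq₀ (div_pos (hx' j₀) (hx j₀)).ne']
  exact hratio i j hij (hcol j)

theorem exists_isScaling_ne_mul {A : Fin N → Fin M → ℝ} {r : Fin N → ℝ} {c : Fin M → ℝ}
    {y : Fin N → ℝ} {x : Fin M → ℝ} (hA : ∀ i j, 0 ≤ A i j) (hconn : ¬ QConnected A)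
    (h : IsScaling A r c y x) (hy : ∀ i, 0 < y i) (hx : ∀ j, 0 < x j) :
    ∃ y' x', (∀ i, 0 < y' i) ∧ (∀ j, 0 < x' j) ∧ IsScaling A r c y' x' ∧
      ∀ γ : ℝ, ¬ ∀ j, x' j = γ * x j := by
  simp only [QConnected, not_forall, not_exists, not_and, not_lt] at hconn
  obtain ⟨J, ⟨j, hj⟩, hJ, hdisc⟩ := hconn
  obtain ⟨l, hl⟩ : ∃ l, l ∉ J := by simpa [eq_univ_iff_forall] using hJ
  have h' := h.rescale_block hA hdisc two_ne_zero
  refine ⟨_, _, fun i => ?_, fun j => ?_, h', fun γ hγ => ?_⟩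
  · have := hy i
    split_ifs <;> positivity
  · have := hx j
    split_ifs <;> positivity
  have h₂ : 2 * x j = γ * x j := by simpa [hj] using hγ j
  have h₁ : 1 * x l = γ * x l := by simpa [hl] using hγ l
  have := (mul_right_cancel₀ (hx j).ne' h₂).trans (mul_right_cancel₀ (hx l).ne' h₁).symm
  norm_num at this

end Connected

section ExpenditureShares

variable {ι κ : Type*} [Fintype ι] {p q w : ι → κ → ℝ}

theorem sum_mul_pos_of_exists_pos (hp : ∀ i j, 0 < p i j) (hq : ∀ i j, 0 ≤ q i j)
    (hcol : ∀ j, ∃ i, 0 < q i j) (j : κ) : 0 < ∑ n, p n j * q n j :=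
  let ⟨i, hi⟩ := hcol j
  sum_pos' (fun n _ => mul_nonneg (hp n j).le (hq n j)) ⟨i, mem_univ i, mul_pos (hp i j) hi⟩

theorem expenditureShare_nonneg (hp : ∀ i j, 0 < p i j) (hq : ∀ i j, 0 ≤ q i j)
    (hw : ∀ i j, w i j = p i j * q i j / ∑ n, p n j * q n j) (i : ι) (j : κ) : 0 ≤ w i j := by
  rw [hw]
  exact div_nonneg (mul_nonneg (hp i j).le (hq i j)) (sum_nonneg fun n _ =>
    mul_nonneg (hp n j).le (hq n j))

theorem expenditureShare_pos_iff (hp : ∀ i j, 0 < p i j) (hq : ∀ i j, 0 ≤ q i j)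
    (hcol : ∀ j, ∃ i, 0 < q i j) (hw : ∀ i j, w i j = p i j * q i j / ∑ n, p n j * q n j)
    (i : ι) (j : κ) : 0 < w i j ↔ 0 < q i j := by
  rw [hw, div_pos_iff_of_pos_right (sum_mul_pos_of_exists_pos hp hq hcol j),
    mul_pos_iff_of_pos_left (hp i j)]

theorem sum_expenditureShare (hp : ∀ i j, 0 < p i j) (hq : ∀ i j, 0 ≤ q i j)
    (hcol : ∀ j, ∃ i, 0 < q i j) (hw : ∀ i j, w i j = p i j * q i j / ∑ n, p n j * q n j)
    (j : κ) : ∑ i, w i j = 1 := by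
  simp only [hw, ← sum_div, div_self (sum_mul_pos_of_exists_pos hp hq hcol j).ne']

end ExpenditureShares

theorem idbSol_iff_isScaling {N M : ℕ} {p w wstar : Fin N → Fin M → ℝ} {PPP : Fin M → ℝ}
    {P : Fin N → ℝ} (hwstar : ∀ i j, wstar i j = w i j / ∑ m, w i m)
    (hrow : ∀ i, ∑ m, w i m ≠ 0) (hcol : ∀ j, ∑ i, w i j = 1) (hPPP : ∀ j, PPP j ≠ 0)
    (hP : ∀ i, P i ≠ 0) :
    IDBSol p w wstar PPP P ↔
      IsScaling (fun i j => w i j / p i j) (fun i => ∑ j, w i j) (fun j => ∑ i, w i j) P PPP := by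
  have hc : ∀ j, ∑ i, P i * (w i j / p i j) * PPP j = (∑ n, w n j * (P n / p n j)) * PPP j :=
    fun j => by rw [sum_mul]; exact sum_congr rfl fun i _ => by ring
  have hr : ∀ i, ∑ j, P i * (w i j / p i j) * PPP j =
      (∑ m, w i m) * ((∑ m, wstar i m * (PPP m / p i m)) * P i) := fun i => by
    rw [sum_mul (f := fun m => wstar i m * (PPP m / p i m)), mul_sum]
    refine sum_congr rfl fun j _ => ?_
    rw [hwstar]
    field_simp [hrow i]
  simp only [IDBSol, IsScaling, hc, hr, hcol, mul_eq_left₀ (hrow _), mul_eq_one_iff_eq_inv₀ (hP _),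
    mul_eq_one_iff_eq_inv₀ (hPPP _)]
  simp only [eq_comm (b := (_ : ℝ)⁻¹), and_comm]

theorem idbSol_iff_isScaling_of_expenditureShare {N M : ℕ} {p q w wstar : Fin N → Fin M → ℝ}
    {PPP : Fin M → ℝ} {P : Fin N → ℝ} (hp : ∀ i j, 0 < p i j) (hq : ∀ i j, 0 ≤ q i j)
    (hqrow : ∀ i, ∃ j, 0 < q i j) (hqcol : ∀ j, ∃ i, 0 < q i j)
    (hw : ∀ i j, w i j = p i j * q i j / ∑ n, p n j * q n j)
    (hwstar : ∀ i j, wstar i j = w i j / ∑ m, w i m) (hPPP : ∀ j, 0 < PPP j) (hP : ∀ i, 0 < P i) :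
    IDBSol p w wstar PPP P ↔
      IsScaling (fun i j => w i j / p i j) (fun i => ∑ j, w i j) (fun j => ∑ i, w i j) P PPP := by
  refine idbSol_iff_isScaling hwstar (fun i => ?_) (sum_expenditureShare hp hq hqcol hw)
    (fun j => (hPPP j).ne') (fun i => (hP i).ne')
  obtain ⟨j, hj⟩ := hqrow i
  exact (sum_pos' (fun m _ => expenditureShare_nonneg hp hq hw i m)
    ⟨j, mem_univ j, (expenditureShare_pos_iff hp hq hqcol hw i j).2 hj⟩).ne'

theorem stmt17_general {N M : ℕ} (hM : 0 < M)
    (p q : Fin N → Fin M → ℝ)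
    (hp : ∀ i j, 0 < p i j)
    (hq0 : ∀ i j, 0 ≤ q i j)
    (hqrow : ∀ i, ∃ j, 0 < q i j)
    (hqcol : ∀ j, ∃ i, 0 < q i j)
    (w wstar : Fin N → Fin M → ℝ)
    (hw : ∀ i j, w i j = p i j * q i j / ∑ n, p n j * q n j)
    (hwstar : ∀ i j, wstar i j = w i j / ∑ m, w i m) :
    ((∃ (PPP : Fin M → ℝ) (P : Fin N → ℝ),
        (∀ j, 0 < PPP j) ∧ (∀ i, 0 < P i) ∧ IDBSol p w wstar PPP P) ∧
      (∀ (PPP PPP' : Fin M → ℝ) (P P' : Fin N → ℝ),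
        (∀ j, 0 < PPP j) → (∀ i, 0 < P i) → IDBSol p w wstar PPP P →
        (∀ j, 0 < PPP' j) → (∀ i, 0 < P' i) → IDBSol p w wstar PPP' P' →
        ∃ γ : ℝ, 0 < γ ∧ (∀ j, PPP' j = γ * PPP j) ∧ (∀ i, P' i = γ⁻¹ * P i)))
    ↔ QConnected q := by
  have hw0 := expenditureShare_nonneg hp hq0 hw
  set A : Fin N → Fin M → ℝ := fun i j => w i j / p i j
  have hA0 : ∀ i j, 0 ≤ A i j := fun i j => div_nonneg (hw0 i j) (hp i j).le
  have hwA : ∀ i j, 0 < w i j ↔ 0 < A i j := fun i j => (div_pos_iff_of_pos_right (hp i j)).symm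
  have hAq : ∀ i j, 0 < A i j ↔ 0 < q i j := fun i j =>
    (hwA i j).symm.trans (expenditureShare_pos_iff hp hq0 hqcol hw i j)
  have hrow : ∀ i, ∃ j, 0 < A i j := fun i => (hqrow i).imp fun j => (hAq i j).2
  have hsol {PPP : Fin M → ℝ} {P : Fin N → ℝ} (hPPP : ∀ j, 0 < PPP j) (hP : ∀ i, 0 < P i) :=
    idbSol_iff_isScaling_of_expenditureShare hp hq0 hqrow hqcol hw hwstar hPPP hP
  rw [← qConnected_congr hAq]
  constructor
  · rintro ⟨⟨PPP, P, hPPP, hP, h⟩, huniq⟩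
    by_contra hconn
    obtain ⟨P', PPP', hP', hPPP', h', hne⟩ :=
      exists_isScaling_ne_mul hA0 hconn ((hsol hPPP hP).1 h) hP hPPP
    obtain ⟨γ, -, hγ, -⟩ := huniq PPP PPP' P P' hPPP hP h hPPP' hP' ((hsol hPPP' hP').2 h')
    exact hne γ hγ
  · refine fun hconn => ⟨?_, fun PPP PPP' P P' hPPP hP h hPPP' hP' h' => ?_⟩
    · obtain ⟨P, PPP, hP, hPPP, h⟩ := exists_isScaling hA0 hw0 hwA hconn hrow hM
      exact ⟨PPP, P, hPPP, hP, (hsol hPPP hP).2 h⟩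
    · exact hconn.exists_eq_mul_of_mul_eq hM hrow hPPP hPPP' (fun i => (hP' i).ne')
        fun i j hij => ((hsol hPPP hP).1 h).mul_eq_mul ((hsol hPPP' hP').1 h') hA0 hP hPPP hP'
          hPPP' hij

theorem stmt17 {N M : ℕ} (hN : 0 < N) (hM : 0 < M)
    (p q : Fin N → Fin M → ℝ)
    (hp : ∀ i j, 0 < p i j)
    (hq0 : ∀ i j, 0 ≤ q i j)
    (hqrow : ∀ i, ∃ j, 0 < q i j)
    (hqcol : ∀ j, ∃ i, 0 < q i j)
    (w wstar : Fin N → Fin M → ℝ)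
    (hw : ∀ i j, w i j = p i j * q i j / ∑ n, p n j * q n j)
    (hwstar : ∀ i j, wstar i j = w i j / ∑ m, w i m) :
    ((∃ (PPP : Fin M → ℝ) (P : Fin N → ℝ),
        (∀ j, 0 < PPP j) ∧ (∀ i, 0 < P i) ∧ IDBSol p w wstar PPP P) ∧
      (∀ (PPP PPP' : Fin M → ℝ) (P P' : Fin N → ℝ),
        (∀ j, 0 < PPP j) → (∀ i, 0 < P i) → IDBSol p w wstar PPP P →
        (∀ j, 0 < PPP' j) → (∀ i, 0 < P' i) → IDBSol p w wstar PPP' P' →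
        ∃ γ : ℝ, 0 < γ ∧ (∀ j, PPP' j = γ * PPP j) ∧ (∀ i, P' i = γ⁻¹ * P i)))
    ↔ QConnected q :=
  stmt17_general hM p q hp hq0 hqrow hqcol w wstar hw hwstar
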